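/- For every even integer n ≥ 6 with n ≡ 0 (mod 6) or n ≡ 2 (mod 6), the helm graph H_{1,n} satisfies ζ(H_{1,n}) = n(4n − 5)/3; this is the value obtained from the balanced 3-partition of the 2n + 1 vertices into color classes of sizes ⌊(2n+1)/3⌋ and ⌈(2n+1)/3⌉, minus the 3n edges of H_{1,n}. -/

import Mathlib

open SimpleGraph

/-- A proper vertex colouring of `G` using exactly `χ(G)` colours. -/
def IsChromaticColoring {V : Type*} (G : SimpleGraph V) (c : V → ℕ) : Prop :=
  (∀ u v, G.Adj u v → c u ≠ c v) ∧ ((Set.range c).ncard : ℕ∞) = G.chromaticNumber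

/-- The set of chromatic completion edges for a colouring `c`: unordered pairs of
distinct non-adjacent vertices with different colours. -/
def completionEdges {V : Type*} (G : SimpleGraph V) (c : V → ℕ) : Set (Sym2 V) :=
  {e | ∃ u v, e = s(u, v) ∧ u ≠ v ∧ ¬ G.Adj u v ∧ c u ≠ c v}

/-- The chromatic completion number `ζ(G)`. -/
noncomputable def zeta {V : Type*} (G : SimpleGraph V) : ℕ :=
  sSup {m | ∃ c : V → ℕ, IsChromaticColoring G c ∧ m = (completionEdges G c).ncard}

/-- The wheel graph `W_{1,n}`: the cycle `C_n` (on the `some` vertices) joined to a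
central hub vertex `none` adjacent to every rim vertex. -/
def wheelGraph (n : ℕ) : SimpleGraph (Option (Fin n)) where
  Adj u v := match u, v with
    | none, none => False
    | none, some _ => True
    | some _, none => True
    | some i, some j => (cycleGraph n).Adj i j
  symm := by
    constructor
    intro u v h
    cases u <;> cases v <;> simp_all
    exact ((cycleGraph n).symm.symm _ _ h)
  loopless := by
    constructor
    intro u h
    cases u with
    | none => exact h
    | some i => exact (cycleGraph n).loopless.irrefl i h

/-- The helm graph `H_{1,n}`: the wheel `W_{1,n}` (on the `inl` vertices) with a pendant
vertex `inr i` attached to the rim vertex `inl (some i)` for each `i`. -/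
def helmGraph (n : ℕ) : SimpleGraph (Option (Fin n) ⊕ Fin n) where
  Adj u v := match u, v with
    | Sum.inl a, Sum.inl b => (wheelGraph n).Adj a b
    | Sum.inl a, Sum.inr j => a = some j
    | Sum.inr i, Sum.inl b => b = some i
    | Sum.inr _, Sum.inr _ => False
  symm := by
    constructor
    intro u v h
    cases u <;> cases v <;> simp_all
    exact (wheelGraph n).symm.symm _ _ h
  loopless := by
    constructor
    intro u h
    cases u with
    | inl a => exact (wheelGraph n).loopless.irrefl a h
    | inr i => exact h

/-! ### Auxiliary material -/

open Finset

instance (n : ℕ) : DecidableRel (wheelGraph n).Adj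
  | none, none => .isFalse id
  | none, some _ => .isTrue trivial
  | some _, none => .isTrue trivial
  | some i, some j => inferInstanceAs (Decidable ((cycleGraph n).Adj i j))

instance (n : ℕ) : DecidableRel (helmGraph n).Adj
  | Sum.inl a, Sum.inl b => inferInstanceAs (Decidable ((wheelGraph n).Adj a b))
  | Sum.inl a, Sum.inr j => inferInstanceAs (Decidable (a = some j))
  | Sum.inr i, Sum.inl b => inferInstanceAs (Decidable (b = some i))
  | Sum.inr _, Sum.inr _ => .isFalse id

@[simp] lemma helm_adj_inl_inl {n : ℕ} (a b : Option (Fin n)) :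
    (helmGraph n).Adj (Sum.inl a) (Sum.inl b) ↔ (wheelGraph n).Adj a b := Iff.rfl
@[simp] lemma helm_adj_inl_inr {n : ℕ} (a : Option (Fin n)) (j : Fin n) :
    (helmGraph n).Adj (Sum.inl a) (Sum.inr j) ↔ a = some j := Iff.rfl
@[simp] lemma helm_adj_inr_inl {n : ℕ} (i : Fin n) (b : Option (Fin n)) :
    (helmGraph n).Adj (Sum.inr i) (Sum.inl b) ↔ b = some i := Iff.rfl
@[simp] lemma helm_adj_inr_inr {n : ℕ} (i j : Fin n) :
    ¬ (helmGraph n).Adj (Sum.inr i) (Sum.inr j) := id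
@[simp] lemma wheel_adj_none_some {n : ℕ} (j : Fin n) :
    (wheelGraph n).Adj none (some j) := trivial
@[simp] lemma wheel_adj_some_none {n : ℕ} (i : Fin n) :
    (wheelGraph n).Adj (some i) none := trivial
@[simp] lemma wheel_adj_none_none {n : ℕ} : ¬ (wheelGraph n).Adj none none := id
@[simp] lemma wheel_adj_some_some {n : ℕ} (i j : Fin n) :
    (wheelGraph n).Adj (some i) (some j) ↔ (cycleGraph n).Adj i j := Iff.rfl

/-! ### Counting mod residues -/

lemma count_mod6 (n r : ℕ) (hr : r < 6) :
    ((Finset.range n).filter (fun i => i % 6 = r)).card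
      = n / 6 + if r < n % 6 then 1 else 0 := by
  induction n with
  | zero => simp
  | succ n ih =>
    rw [Finset.range_add_one, Finset.filter_insert]
    by_cases h : n % 6 = r
    · rw [if_pos h, Finset.card_insert_of_notMem (by simp), ih]
      split_ifs <;> omega
    · rw [if_neg h, ih]
      split_ifs <;> omega

lemma count_mod2 (n r : ℕ) (hr : r < 2) :
    ((Finset.range n).filter (fun i => i % 2 = r)).card
      = n / 2 + if r < n % 2 then 1 else 0 := by
  induction n with
  | zero => simp
  | succ n ih =>
    rw [Finset.range_add_one, Finset.filter_insert]
    by_cases h : n % 2 = r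
    · rw [if_pos h, Finset.card_insert_of_notMem (by simp), ih]
      split_ifs <;> omega
    · rw [if_neg h, ih]
      split_ifs <;> omega

lemma count_mod6_fn (n : ℕ) (p : ℕ → Prop) [DecidablePred p] :
    ((Finset.range n).filter (fun i => p (i % 6))).card
      = ∑ r ∈ (Finset.range 6).filter p, ((Finset.range n).filter (fun i => i % 6 = r)).card := by
  rw [Finset.card_eq_sum_card_fiberwise (f := fun i => i % 6)
      (t := (Finset.range 6).filter p)
      (fun x hx => by simp at hx ⊢; exact ⟨Nat.mod_lt _ (by norm_num), hx.2⟩)]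
  apply Finset.sum_congr rfl
  intro r hr
  simp only [Finset.mem_filter, Finset.mem_range] at hr
  congr 1
  rw [Finset.filter_filter]
  apply Finset.filter_congr
  intro i hi
  constructor
  · rintro ⟨-, h⟩; exact h
  · intro h; exact ⟨by rw [h]; exact hr.2, h⟩

/-! ### The general counting identity -/

/-- The complement-with-different-colours graph. -/
def compGraph {V : Type*} (G : SimpleGraph V) (c : V → ℕ) : SimpleGraph V where
  Adj u v := u ≠ v ∧ ¬ G.Adj u v ∧ c u ≠ c v
  symm := by constructor; intro u v ⟨h1, h2, h3⟩; exact ⟨h1.symm, fun h => h2 h.symm, h3.symm⟩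
  loopless := by constructor; intro u ⟨h1, _⟩; exact h1 rfl

instance {V : Type*} [DecidableEq V] (G : SimpleGraph V) [DecidableRel G.Adj] (c : V → ℕ) :
    DecidableRel (compGraph G c).Adj := fun u v => by unfold compGraph; infer_instance

lemma completionEdges_eq {V : Type*} (G : SimpleGraph V) (c : V → ℕ) :
    completionEdges G c = (compGraph G c).edgeSet := by
  ext e
  induction e using Sym2.ind with
  | _ u v =>
    simp only [completionEdges, Set.mem_setOf_eq, mem_edgeSet]
    constructor
    · rintro ⟨a, b, hab, h1, h2, h3⟩
      rw [Sym2.eq_iff] at hab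
      rcases hab with ⟨rfl, rfl⟩ | ⟨rfl, rfl⟩
      · exact ⟨h1, h2, h3⟩
      · exact ⟨h1.symm, fun h => h2 h.symm, h3.symm⟩
    · rintro ⟨h1, h2, h3⟩
      exact ⟨u, v, rfl, h1, h2, h3⟩

lemma key_count {V : Type*} [Fintype V] [DecidableEq V] (G : SimpleGraph V)
    [DecidableRel G.Adj] (c : V → ℕ) (hc : ∀ u v, G.Adj u v → c u ≠ c v) :
    2 * (completionEdges G c).ncard
      + (∑ v : V, (Finset.univ.filter (fun u => c u = c v)).card)
      + 2 * G.edgeFinset.card = Fintype.card V ^ 2 := by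
  classical
  have hedge : (completionEdges G c).ncard = (compGraph G c).edgeFinset.card := by
    rw [completionEdges_eq, Set.ncard_eq_toFinset_card']
    congr 1
  have hdeg : ∀ v : V, (compGraph G c).degree v + (Finset.univ.filter (fun u => c u = c v)).card
      + G.degree v = Fintype.card V := by
    intro v
    have h1 : (compGraph G c).degree v = (Finset.univ.filter (fun u => (compGraph G c).Adj v u)).card := by
      rw [← card_neighborFinset_eq_degree]; congr 1; ext u; simp
    have h2 : G.degree v = (Finset.univ.filter (fun u => G.Adj v u)).card := by
      rw [← card_neighborFinset_eq_degree]; congr 1; ext u; simp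
    rw [h1, h2, Finset.card_filter, Finset.card_filter, Finset.card_filter,
      ← Finset.sum_add_distrib, ← Finset.sum_add_distrib]
    have hpt : ∀ u : V, ((if (compGraph G c).Adj v u then 1 else 0)
        + (if c u = c v then 1 else 0) + (if G.Adj v u then 1 else 0)) = 1 := by
      intro u
      by_cases hcu : c u = c v
      · have hna : ¬ (compGraph G c).Adj v u := fun h => h.2.2 hcu.symm
        have hng : ¬ G.Adj v u := fun h => hc v u h hcu.symm
        simp [hna, hng, hcu]
      · by_cases hadj : G.Adj v u
        · have hna : ¬ (compGraph G c).Adj v u := fun h => h.2.1 hadj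
          simp [hna, hcu, hadj]
        · have hne : v ≠ u := by rintro rfl; exact hcu rfl
          have ha : (compGraph G c).Adj v u := ⟨hne, hadj, fun h => hcu h.symm⟩
          simp [ha, hcu, hadj]
    rw [Finset.sum_congr rfl fun u _ => hpt u, Finset.sum_const, smul_eq_mul,
      mul_one, Finset.card_univ]
  rw [hedge, ← sum_degrees_eq_twice_card_edges, ← sum_degrees_eq_twice_card_edges,
    ← Finset.sum_add_distrib, ← Finset.sum_add_distrib,
    Finset.sum_congr rfl fun v _ => hdeg v]
  rw [Finset.sum_const, smul_eq_mul, Finset.card_univ, sq]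

/-! ### Degrees and edge count of the helm graph -/

lemma deg_filter {V : Type*} [Fintype V] [DecidableEq V] (G : SimpleGraph V)
    [DecidableRel G.Adj] (v : V) :
    G.degree v = ∑ u : V, if G.Adj v u then 1 else 0 := by
  rw [← card_neighborFinset_eq_degree, ← Finset.card_filter]
  congr 1; ext u; simp

lemma cycle_deg_sum {n : ℕ} (hn : 3 ≤ n) (i : Fin n) :
    ∑ j : Fin n, (if (cycleGraph n).Adj i j then 1 else 0) = 2 := by
  rw [← deg_filter]
  obtain ⟨m, rfl⟩ : ∃ m, n = m + 3 := ⟨n - 3, by omega⟩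
  exact cycleGraph_degree_three_le

lemma helm_deg_hub (n : ℕ) : (helmGraph n).degree (Sum.inl none) = n := by
  rw [deg_filter, Fintype.sum_sum_type, Fintype.sum_option]
  simp

lemma helm_deg_rim {n : ℕ} (hn : 3 ≤ n) (i : Fin n) :
    (helmGraph n).degree (Sum.inl (some i)) = 4 := by
  rw [deg_filter, Fintype.sum_sum_type, Fintype.sum_option]
  simp only [helm_adj_inl_inl, helm_adj_inl_inr, wheel_adj_some_none, wheel_adj_some_some,
    if_true, Option.some.injEq]
  rw [cycle_deg_sum hn i]
  simp

lemma helm_deg_pend {n : ℕ} (i : Fin n) :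
    (helmGraph n).degree (Sum.inr i) = 1 := by
  rw [deg_filter, Fintype.sum_sum_type, Fintype.sum_option]
  simp [eq_comm]

lemma helm_edge_count {n : ℕ} (hn : 3 ≤ n) :
    2 * (helmGraph n).edgeFinset.card = 6 * n := by
  rw [← sum_degrees_eq_twice_card_edges, Fintype.sum_sum_type, Fintype.sum_option,
    helm_deg_hub]
  have h1 : ∀ i : Fin n, (helmGraph n).degree (Sum.inl (some i)) = 4 := helm_deg_rim hn
  have h2 : ∀ i : Fin n, (helmGraph n).degree (Sum.inr i) = 1 := helm_deg_pend
  simp only [h1, h2, Finset.sum_const, Finset.card_univ, Fintype.card_fin, smul_eq_mul]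
  ring

/-! ### The balanced colouring -/

def pendColor (m r : ℕ) : ℕ :=
  if r = 0 then 1
  else if m = 0 ∧ r = 1 then 0
  else if m = 2 ∧ r = 3 then 0
  else 2

def goodColoring (n : ℕ) : Option (Fin n) ⊕ Fin n → ℕ
  | Sum.inl none => 2
  | Sum.inl (some i) => i.val % 2
  | Sum.inr i => pendColor (n % 6) (i.val % 6)

lemma pendColor_ne (m r : ℕ) (hr : r < 6) : pendColor m r ≠ r % 2 := by
  unfold pendColor
  interval_cases r <;> norm_num <;> split_ifs <;> first | exact not_false | omega

lemma pendColor_lt (m r : ℕ) : pendColor m r < 3 := by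
  unfold pendColor; split_ifs <;> omega

lemma cycle_adj_parity {n : ℕ} (hn2 : n % 2 = 0) (hn : 3 ≤ n) {i j : Fin n}
    (h : (cycleGraph n).Adj i j) : i.val % 2 ≠ j.val % 2 := by
  obtain ⟨m, rfl⟩ : ∃ m, n = m + 2 := ⟨n - 2, by omega⟩
  rw [cycleGraph_adj] at h
  have key : ∀ a : Fin (m + 2), ((a + 1 : Fin (m + 2)).val) % 2 ≠ a.val % 2 := by
    intro a
    rw [Fin.val_add_one]
    split_ifs with hlast
    · rw [hlast]
      simp only [Fin.val_last]
      omega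
    · omega
  rcases h with h | h
  · have : i = j + 1 := by rw [sub_eq_iff_eq_add] at h; rw [h]; exact add_comm 1 _
    subst this; exact key j
  · have : j = i + 1 := by rw [sub_eq_iff_eq_add] at h; rw [h]; exact add_comm 1 _
    subst this; exact (key i).symm

lemma goodColoring_proper {n : ℕ} (hn2 : n % 2 = 0) (hn : 3 ≤ n) :
    ∀ u v, (helmGraph n).Adj u v → goodColoring n u ≠ goodColoring n v := by
  have hpend : ∀ i : Fin n, goodColoring n (Sum.inl (some i)) ≠ goodColoring n (Sum.inr i) := by
    intro i
    have h1 : i.val % 2 = (i.val % 6) % 2 := by omega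
    simp only [goodColoring]
    rw [h1]
    exact fun h => pendColor_ne (n % 6) (i.val % 6) (Nat.mod_lt _ (by norm_num)) h.symm
  rintro (a | i) (b | j) h
  · match a, b, h with
    | none, some j, _ => simp [goodColoring]; omega
    | some i, none, _ => simp [goodColoring]; omega
    | some i, some j, h => exact cycle_adj_parity hn2 hn h
  · have : a = some j := h
    subst this
    exact hpend j
  · have : b = some i := h
    subst this
    exact (hpend i).symm
  · exact absurd h (helm_adj_inr_inr i j)

lemma goodColoring_lt {n : ℕ} (v : Option (Fin n) ⊕ Fin n) : goodColoring n v < 3 := by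
  match v with
  | Sum.inl none => norm_num [goodColoring]
  | Sum.inl (some i) => simp only [goodColoring]; omega
  | Sum.inr i => exact pendColor_lt _ _

lemma goodColoring_range {n : ℕ} (hn : 3 ≤ n) :
    Set.range (goodColoring n) = {0, 1, 2} := by
  apply Set.Subset.antisymm
  · rintro x ⟨v, rfl⟩
    have := goodColoring_lt v
    simp only [Set.mem_insert_iff, Set.mem_singleton_iff]
    omega
  · rintro x hx
    simp only [Set.mem_insert_iff, Set.mem_singleton_iff] at hx
    rcases hx with rfl | rfl | rfl
    · exact ⟨Sum.inl (some ⟨0, by omega⟩), by simp [goodColoring]⟩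
    · exact ⟨Sum.inl (some ⟨1, by omega⟩), by simp [goodColoring]⟩
    · exact ⟨Sum.inl none, rfl⟩

lemma helm_colorable {n : ℕ} (hn2 : n % 2 = 0) (hn : 3 ≤ n) :
    (helmGraph n).Colorable 3 :=
  ⟨⟨fun v => ⟨goodColoring n v, goodColoring_lt v⟩,
    fun h hc => goodColoring_proper hn2 hn _ _ h (by simpa [Fin.ext_iff] using hc)⟩⟩

lemma helm_chromaticNumber {n : ℕ} (hn2 : n % 2 = 0) (hn : 3 ≤ n) :
    (helmGraph n).chromaticNumber = 3 := by
  have hle : (helmGraph n).chromaticNumber ≤ 3 := (helm_colorable hn2 hn).chromaticNumber_le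
  have hclique : (helmGraph n).IsNClique 3
      {Sum.inl none, Sum.inl (some ⟨0, by omega⟩), Sum.inl (some ⟨1, by omega⟩)} := by
    rw [is3Clique_triple_iff]
    refine ⟨trivial, trivial, ?_⟩
    show (cycleGraph n).Adj _ _
    obtain ⟨m, rfl⟩ : ∃ m, n = m + 2 := ⟨n - 2, by omega⟩
    rw [cycleGraph_adj]
    right
    ext
    simp [Fin.sub_def]
    try omega
  have hnot : ¬ (helmGraph n).Colorable 2 := by
    intro h
    exact (h.cliqueFree (by norm_num)) _ hclique
  have h2 : ¬ (helmGraph n).chromaticNumber ≤ 2 := by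
    rw [show ((2:ℕ∞)) = ((2:ℕ):ℕ∞) by norm_num, chromaticNumber_le_iff_colorable]
    exact hnot
  obtain ⟨m, hm⟩ : ∃ m : ℕ, (helmGraph n).chromaticNumber = m := by
    cases hχ : (helmGraph n).chromaticNumber with
    | top => rw [hχ] at hle; exact absurd hle (by simp)
    | coe m => exact ⟨m, rfl⟩
  rw [hm] at hle h2 ⊢
  have h3 : (3:ℕ∞) = ((3:ℕ):ℕ∞) := by norm_num
  rw [h3] at hle ⊢
  rw [show ((2:ℕ∞)) = ((2:ℕ):ℕ∞) by norm_num] at h2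
  rw [Nat.cast_le] at hle
  rw [Nat.cast_le] at h2
  rw [Nat.cast_inj]
  omega

/-! ### Fibre bookkeeping -/

lemma sum_fib {V : Type*} [Fintype V] [DecidableEq V] (c : V → ℕ) :
    ∑ v : V, (Finset.univ.filter (fun u => c u = c v)).card
      = ∑ b ∈ Finset.univ.image c, ((Finset.univ.filter (fun u => c u = b)).card) ^ 2 := by
  rw [← Finset.sum_fiberwise_of_maps_to (g := c) (t := Finset.univ.image c)
    (fun v _ => Finset.mem_image_of_mem c (Finset.mem_univ v))]
  apply Finset.sum_congr rfl
  intro b hb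
  have : ∀ v ∈ Finset.univ.filter (fun v => c v = b),
      (Finset.univ.filter (fun u => c u = c v)).card
        = (Finset.univ.filter (fun u => c u = b)).card := by
    intro v hv
    simp only [Finset.mem_filter] at hv
    rw [hv.2]
  rw [Finset.sum_congr rfl this, Finset.sum_const, smul_eq_mul, sq]

lemma fib_partition {V : Type*} [Fintype V] [DecidableEq V] (c : V → ℕ) :
    ∑ b ∈ Finset.univ.image c, (Finset.univ.filter (fun u => c u = b)).card
      = Fintype.card V := by
  rw [← Finset.card_univ]
  exact (Finset.card_eq_sum_card_fiberwise
    (fun v _ => Finset.mem_image_of_mem c (Finset.mem_univ v))).symm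

lemma int_sq_ge_one (a b : ℤ) (h : a ≠ b) : 1 ≤ (a - b) ^ 2 := by
  have h' := sub_ne_zero.mpr h
  rcases h'.lt_or_gt with h' | h' <;> nlinarith

lemma min_sum_sq (x y z N : ℕ) (hN : x + y + z = N)
    (hne : ¬ (x = y ∧ y = z)) : N ^ 2 + 2 ≤ 3 * (x ^ 2 + y ^ 2 + z ^ 2) := by
  have hne' : ¬ ((x:ℤ) = y ∧ (y:ℤ) = z) := by
    intro ⟨h1, h2⟩; exact hne ⟨by exact_mod_cast h1, by exact_mod_cast h2⟩
  have key : 2 ≤ ((x:ℤ)-y)^2 + ((y:ℤ)-z)^2 + ((x:ℤ)-z)^2 := by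
    by_cases hxy : (x:ℤ) = y
    · have hyz : (y:ℤ) ≠ z := fun h => hne' ⟨hxy, h⟩
      have hxz : (x:ℤ) ≠ z := hxy ▸ hyz
      have g1 := int_sq_ge_one _ _ hyz
      have g2 := int_sq_ge_one _ _ hxz
      nlinarith [sq_nonneg ((x:ℤ)-y)]
    · by_cases hyz : (y:ℤ) = z
      · have hxz : (x:ℤ) ≠ z := fun h => hxy (h.trans hyz.symm)
        have g1 := int_sq_ge_one _ _ hxy
        have g2 := int_sq_ge_one _ _ hxz
        nlinarith [sq_nonneg ((y:ℤ)-z)]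
      · have g1 := int_sq_ge_one _ _ hxy
        have g2 := int_sq_ge_one _ _ hyz
        nlinarith [sq_nonneg ((x:ℤ)-z)]
  zify
  have hN' : (x:ℤ) + y + z = N := by exact_mod_cast hN
  nlinarith [key]

lemma fib_split (n b : ℕ) :
    (Finset.univ.filter (fun v => goodColoring n v = b)).card
      = (if 2 = b then 1 else 0)
        + ((Finset.range n).filter (fun i => i % 2 = b)).card
        + ((Finset.range n).filter (fun i => pendColor (n % 6) (i % 6) = b)).card := by
  rw [Finset.card_filter, Fintype.sum_sum_type, Fintype.sum_option]
  simp only [goodColoring]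
  rw [Finset.card_filter, Finset.card_filter]
  congr 1
  · congr 1
    exact Fin.sum_univ_eq_sum_range (fun i => if i % 2 = b then 1 else 0) n
  · exact Fin.sum_univ_eq_sum_range (fun i => if pendColor (n % 6) (i % 6) = b then 1 else 0) n

/-- For even `n ≥ 6` with `n ≡ 0 (mod 6)` or `n ≡ 2 (mod 6)`,
`ζ(H_{1,n}) = n(4n-5)/3`. -/
theorem zeta_helm_zero_or_two_mod_six (n : ℕ) (hn : 6 ≤ n)
    (hmod : n % 6 = 0 ∨ n % 6 = 2) :
    zeta (helmGraph n) = n * (4 * n - 5) / 3 := by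
  have hn2 : n % 2 = 0 := by omega
  have hn3 : 3 ≤ n := by omega
  have hNcard : Fintype.card (Option (Fin n) ⊕ Fin n) = 2 * n + 1 := by
    rw [Fintype.card_sum, Fintype.card_option, Fintype.card_fin]
    omega
  have hchrom : IsChromaticColoring (helmGraph n) (goodColoring n) := by
    refine ⟨goodColoring_proper hn2 hn3, ?_⟩
    rw [goodColoring_range hn3, helm_chromaticNumber hn2 hn3]
    rw [show ({0,1,2} : Set ℕ) = (({0,1,2} : Finset ℕ) : Set ℕ) by simp,
      Set.ncard_coe_finset]
    norm_num
  have himg : Finset.univ.image (goodColoring n) = {0,1,2} := by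
    apply Finset.coe_injective
    rw [Finset.coe_image, Finset.coe_univ, Set.image_univ, goodColoring_range hn3]
    simp
  -- divisibility
  have hdvd3 : 3 ∣ n * (4 * n - 5) := by
    rcases hmod with h | h
    · exact Dvd.dvd.mul_right (by omega) _
    · exact Dvd.dvd.mul_left (by omega : (3:ℕ) ∣ 4 * n - 5) n
  have hdvd : 3 * (n * (4 * n - 5) / 3) = n * (4 * n - 5) := Nat.mul_div_cancel' hdvd3
  -- the value of the balanced colouring
  have hm0 : (completionEdges (helmGraph n) (goodColoring n)).ncard = n * (4 * n - 5) / 3 := by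
    have hkc := key_count (helmGraph n) (goodColoring n) (goodColoring_proper hn2 hn3)
    rw [sum_fib, himg, hNcard, helm_edge_count hn3] at hkc
    rw [Finset.sum_insert (by decide), Finset.sum_insert (by decide),
      Finset.sum_singleton] at hkc
    have hA0 : ((Finset.range n).filter (fun i => i % 2 = 0)).card = n / 2 := by
      rw [count_mod2 n 0 (by norm_num)]
      split_ifs <;> omega
    have hA1 : ((Finset.range n).filter (fun i => i % 2 = 1)).card = n / 2 := by
      rw [count_mod2 n 1 (by norm_num)]
      split_ifs <;> omega
    have hA2 : ((Finset.range n).filter (fun i => i % 2 = 2)).card = 0 := by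
      rw [Finset.card_eq_zero, Finset.filter_eq_empty_iff]
      intro i _
      omega
    rcases hmod with h6 | h6
    · obtain ⟨k, rfl⟩ : ∃ k, n = 6 * k := ⟨n / 6, by omega⟩
      have hk : 1 ≤ k := by omega
      have hB : ∀ b, ((Finset.range (6*k)).filter
          (fun i => pendColor (6*k % 6) (i % 6) = b)).card
          = ∑ r ∈ (Finset.range 6).filter (fun r => pendColor 0 r = b),
              ((Finset.range (6*k)).filter (fun i => i % 6 = r)).card := by
        intro b
        rw [show 6 * k % 6 = 0 by omega]
        exact count_mod6_fn (6*k) (fun r => pendColor 0 r = b)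
      have hcnt : ∀ r < 6, ((Finset.range (6*k)).filter (fun i => i % 6 = r)).card = k := by
        intro r hr
        rw [count_mod6 (6*k) r hr]
        split_ifs <;> omega
      have hB0 : ((Finset.range (6*k)).filter
          (fun i => pendColor (6*k % 6) (i % 6) = 0)).card = k := by
        rw [hB 0, show (Finset.range 6).filter (fun r => pendColor 0 r = 0) = {1} by decide,
          Finset.sum_singleton, hcnt 1 (by norm_num)]
      have hB1 : ((Finset.range (6*k)).filter
          (fun i => pendColor (6*k % 6) (i % 6) = 1)).card = k := by
        rw [hB 1, show (Finset.range 6).filter (fun r => pendColor 0 r = 1) = {0} by decide,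
          Finset.sum_singleton, hcnt 0 (by norm_num)]
      have hB2 : ((Finset.range (6*k)).filter
          (fun i => pendColor (6*k % 6) (i % 6) = 2)).card = 4 * k := by
        rw [hB 2, show (Finset.range 6).filter (fun r => pendColor 0 r = 2)
            = {2, 3, 4, 5} by decide]
        rw [Finset.sum_insert (by decide), Finset.sum_insert (by decide),
          Finset.sum_insert (by decide), Finset.sum_singleton,
          hcnt 2 (by norm_num), hcnt 3 (by norm_num), hcnt 4 (by norm_num),
          hcnt 5 (by norm_num)]
        ring
      rw [fib_split, fib_split, fib_split, hA0, hA1, hA2, hB0, hB1, hB2] at hkc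
      norm_num at hkc
      have hdiv : 6 * k / 2 = 3 * k := by omega
      rw [hdiv] at hkc
      set M := (completionEdges (helmGraph (6 * k)) (goodColoring (6 * k))).ncard with hMdef
      have h10 : 10 * k ≤ 48 * k^2 := by nlinarith
      have htarget : 6 * k * (4 * (6 * k) - 5) / 3 = 48 * k^2 - 10 * k := by
        have h1 : 6 * k * (4 * (6 * k) - 5) = 3 * (48 * k^2 - 10 * k) := by
          have h5 : 5 ≤ 4 * (6 * k) := by omega
          zify [h5, h10]
          ring
        rw [h1, Nat.mul_div_cancel_left _ (by norm_num)]
      rw [htarget]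
      ring_nf at hkc
      zify [h10]
      zify at hkc
      linarith [hkc]
    · obtain ⟨k, rfl⟩ : ∃ k, n = 6 * k + 2 := ⟨n / 6, by omega⟩
      have hk : 1 ≤ k := by omega
      have hB : ∀ b, ((Finset.range (6*k+2)).filter
          (fun i => pendColor ((6*k+2) % 6) (i % 6) = b)).card
          = ∑ r ∈ (Finset.range 6).filter (fun r => pendColor 2 r = b),
              ((Finset.range (6*k+2)).filter (fun i => i % 6 = r)).card := by
        intro b
        rw [show (6 * k + 2) % 6 = 2 by omega]
        exact count_mod6_fn (6*k+2) (fun r => pendColor 2 r = b)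
      have hcnt : ∀ r < 6, ((Finset.range (6*k+2)).filter (fun i => i % 6 = r)).card
          = k + if r < 2 then 1 else 0 := by
        intro r hr
        rw [count_mod6 (6*k+2) r hr]
        split_ifs <;> omega
      have hB0 : ((Finset.range (6*k+2)).filter
          (fun i => pendColor ((6*k+2) % 6) (i % 6) = 0)).card = k := by
        rw [hB 0, show (Finset.range 6).filter (fun r => pendColor 2 r = 0) = {3} by decide,
          Finset.sum_singleton, hcnt 3 (by norm_num)]
        norm_num
      have hB1 : ((Finset.range (6*k+2)).filter
          (fun i => pendColor ((6*k+2) % 6) (i % 6) = 1)).card = k + 1 := by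
        rw [hB 1, show (Finset.range 6).filter (fun r => pendColor 2 r = 1) = {0} by decide,
          Finset.sum_singleton, hcnt 0 (by norm_num)]
        norm_num
      have hB2 : ((Finset.range (6*k+2)).filter
          (fun i => pendColor ((6*k+2) % 6) (i % 6) = 2)).card = 4 * k + 1 := by
        rw [hB 2, show (Finset.range 6).filter (fun r => pendColor 2 r = 2)
            = {1, 2, 4, 5} by decide]
        rw [Finset.sum_insert (by decide), Finset.sum_insert (by decide),
          Finset.sum_insert (by decide), Finset.sum_singleton,
          hcnt 1 (by norm_num), hcnt 2 (by norm_num), hcnt 4 (by norm_num),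
          hcnt 5 (by norm_num)]
        norm_num
        omega
      have hdiv : (6 * k + 2) / 2 = 3 * k + 1 := by omega
      rw [fib_split, fib_split, fib_split, hA0, hA1, hA2, hB0, hB1, hB2, hdiv] at hkc
      norm_num at hkc
      set M := (completionEdges (helmGraph (6 * k + 2)) (goodColoring (6 * k + 2))).ncard
        with hMdef
      have htarget : (6 * k + 2) * (4 * (6 * k + 2) - 5) / 3 = 48 * k^2 + 22 * k + 2 := by
        have h1 : (6 * k + 2) * (4 * (6 * k + 2) - 5) = 3 * (48 * k^2 + 22 * k + 2) := by
          have h5 : 5 ≤ 4 * (6 * k + 2) := by omega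
          zify [h5]
          ring
        rw [h1, Nat.mul_div_cancel_left _ (by norm_num)]
      rw [htarget]
      ring_nf at hkc
      zify at hkc ⊢
      linarith [hkc]
  -- upper bound
  have hbound : ∀ m ∈ {m | ∃ c : Option (Fin n) ⊕ Fin n → ℕ,
      IsChromaticColoring (helmGraph n) c ∧ m = (completionEdges (helmGraph n) c).ncard},
      m ≤ n * (4 * n - 5) / 3 := by
    rintro m ⟨c, ⟨hprop, hrange⟩, rfl⟩
    have h3 : (Finset.univ.image c).card = 3 := by
      rw [helm_chromaticNumber hn2 hn3] at hrange
      have h' : (Set.range c).ncard = 3 := by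
        have : ((Set.range c).ncard : ℕ∞) = ((3:ℕ) : ℕ∞) := by
          rw [hrange]; norm_num
        exact_mod_cast this
      rw [← Set.image_univ, ← Finset.coe_univ, ← Finset.coe_image,
        Set.ncard_coe_finset] at h'
      exact h'
    obtain ⟨x, y, z, hxy, hxz, hyz, hset⟩ := Finset.card_eq_three.mp h3
    have hsum := fib_partition c
    rw [hset, hNcard, Finset.sum_insert (by simp [hxy, hxz]),
      Finset.sum_insert (by simp [hyz]), Finset.sum_singleton] at hsum
    have hkc := key_count (helmGraph n) c hprop
    rw [sum_fib, hset, hNcard, helm_edge_count hn3,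
      Finset.sum_insert (by simp [hxy, hxz]), Finset.sum_insert (by simp [hyz]),
      Finset.sum_singleton] at hkc
    set Fx := (Finset.univ.filter (fun u => c u = x)).card
    set Fy := (Finset.univ.filter (fun u => c u = y)).card
    set Fz := (Finset.univ.filter (fun u => c u = z)).card
    have hne : ¬ (Fx = Fy ∧ Fy = Fz) := by
      rintro ⟨h1, h2⟩
      omega
    rw [← add_assoc] at hsum
    have hmin := min_sum_sq Fx Fy Fz (2*n+1) hsum hne
    set M := (completionEdges (helmGraph n) c).ncard with hMdef
    have key : 6 * M ≤ 2 * (n * (4 * n - 5)) := by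
      have h5 : 5 ≤ 4 * n := by omega
      ring_nf at hkc hmin
      zify [h5]
      zify at hkc hmin
      nlinarith [hkc, hmin]
    omega
  -- conclusion
  have hmem : n * (4 * n - 5) / 3 ∈ {m | ∃ c : Option (Fin n) ⊕ Fin n → ℕ,
      IsChromaticColoring (helmGraph n) c ∧ m = (completionEdges (helmGraph n) c).ncard} :=
    ⟨goodColoring n, hchrom, hm0.symm⟩
  unfold zeta
  exact le_antisymm (csSup_le ⟨_, hmem⟩ hbound) (le_csSup ⟨_, hbound⟩ hmem)
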